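/- arXiv:2401.00089 — 2 statements merged into one kernel-verified Lean document; each statement's English description precedes it below -/
import Mathlib

section
/- Let m be a positive integer and let T_m, L_m, U_m be the m×m integer matrices defined by (T_m)_{r,s} = #{I ⊆ {1,...,m} : #I = r ∧ #{i ∈ I : i ≤ s} is odd}, (L_m)_{r,t} = binom(m-t, r-t), and (U_m)_{t,s} = (-2)^{t-1}·binom(s,t). Then T_m = L_m · U_m. -/
/-- `T m r s` is the number of subsets `I ⊆ {1,…,m}` with `#I = r` such that
`#{i ∈ I : i ≤ s}` is odd. -/
def T (m r s : ℕ) : ℕ :=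
  ((Finset.powersetCard r (Finset.Icc 1 m)).filter
    (fun I => Odd ((I.filter (fun i => i ≤ s)).card))).card

/-- The integer matrix `T_m`, indices `r,s ∈ {1,…,m}` encoded via `Fin m`. -/
def Tm (m : ℕ) : Matrix (Fin m) (Fin m) ℤ :=
  Matrix.of fun r s => (T m (r + 1) (s + 1) : ℤ)

/-- `L_m` with `(L_m)_{r,t} = binom(m-t, r-t)` (zero when `t > r`). -/
def Lm (m : ℕ) : Matrix (Fin m) (Fin m) ℤ :=
  Matrix.of fun r t =>
    if (t : ℕ) ≤ (r : ℕ) then ((m - (t + 1)).choose ((r : ℕ) - (t : ℕ)) : ℤ) else 0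

/-- `U_m` with `(U_m)_{t,s} = (-2)^{t-1} binom(s,t)`. -/
def Um (m : ℕ) : Matrix (Fin m) (Fin m) ℤ :=
  Matrix.of fun t s => (-2) ^ (t : ℕ) * (((s : ℕ) + 1).choose ((t : ℕ) + 1) : ℤ)

/-- The right-hand-side sum, in 1-based indexing. -/
def Ssum (m r s : ℕ) : ℤ :=
  ∑ t ∈ Finset.Icc 1 m,
    (if t ≤ r then ((m - t).choose (r - t) : ℤ) else 0) * (-2) ^ (t - 1) * (s.choose t : ℤ)

lemma T_zero (m s : ℕ) : T m 0 s = 0 := by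
  unfold T
  simp [Finset.powersetCard_zero, Finset.filter_singleton]

lemma Icc_succ (m : ℕ) : Finset.Icc 1 (m + 1) = insert (m + 1) (Finset.Icc 1 m) := by
  ext x
  simp only [Finset.mem_Icc, Finset.mem_insert]
  omega

lemma T_rec (m r s : ℕ) (hs : s ≤ m) : T (m + 1) (r + 1) s = T m (r + 1) s + T m r s := by
  classical
  have hni : (m + 1) ∉ Finset.Icc 1 m := by simp
  unfold T
  rw [Icc_succ, Finset.powersetCard_succ_insert hni, Finset.filter_union,
    Finset.card_union_of_disjoint]
  · congr 1
    rw [Finset.filter_image, Finset.card_image_of_injOn]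
    · congr 1
      apply Finset.filter_congr
      intro I hI
      have hmI : ¬ ((m + 1) ≤ s) := by omega
      rw [Finset.filter_insert, if_neg hmI]
    · intro I hI J hJ hEq
      have hI' : (m + 1) ∉ I := fun h =>
        hni ((Finset.mem_powersetCard.1 (Finset.mem_filter.1 hI).1).1 h)
      have hJ' : (m + 1) ∉ J := fun h =>
        hni ((Finset.mem_powersetCard.1 (Finset.mem_filter.1 hJ).1).1 h)
      have := congrArg (fun X => Finset.erase X (m + 1)) hEq
      simpa [Finset.erase_insert, hI', hJ'] using this
  · apply Finset.disjoint_filter_filter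
    rw [Finset.disjoint_left]
    intro I hI hI2
    have h1 : I ⊆ Finset.Icc 1 m := (Finset.mem_powersetCard.1 hI).1
    rcases Finset.mem_image.1 hI2 with ⟨J, hJ, rfl⟩
    exact hni (h1 (Finset.mem_insert_self _ _))

lemma T_top (m r : ℕ) : T m r m = if Odd r then m.choose r else 0 := by
  classical
  unfold T
  have h : ∀ I ∈ Finset.powersetCard r (Finset.Icc 1 m),
      (Odd ((I.filter (fun i => i ≤ m)).card) ↔ Odd r) := by
    intro I hI
    obtain ⟨hsub, hcard⟩ := Finset.mem_powersetCard.1 hI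
    have : I.filter (fun i => i ≤ m) = I := by
      apply Finset.filter_true_of_mem
      intro x hx
      exact (Finset.mem_Icc.1 (hsub hx)).2
    rw [this, hcard]
  rw [Finset.filter_congr h]
  by_cases hr : Odd r
  · rw [if_pos hr]
    rw [Finset.filter_true_of_mem (fun _ _ => hr), Finset.card_powersetCard, Nat.card_Icc]
    simp
  · rw [if_neg hr]
    rw [Finset.filter_false_of_mem (fun _ _ => hr), Finset.card_empty]

lemma S_zero (m s : ℕ) : Ssum m 0 s = 0 := by
  unfold Ssum
  apply Finset.sum_eq_zero
  intro t ht
  have : ¬ (t ≤ 0) := by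
    have := (Finset.mem_Icc.1 ht).1; omega
  rw [if_neg this, zero_mul, zero_mul]

lemma S_rec (m r s : ℕ) (hs : s ≤ m) :
    Ssum (m + 1) (r + 1) s = Ssum m (r + 1) s + Ssum m r s := by
  unfold Ssum
  have hni : (m + 1) ∉ Finset.Icc 1 m := by simp
  rw [Icc_succ, Finset.sum_insert hni]
  have hc : s.choose (m + 1) = 0 := Nat.choose_eq_zero_of_lt (by omega)
  rw [hc]
  rw [← Finset.sum_add_distrib]
  rw [show ((0 : ℕ) : ℤ) = 0 by norm_num, mul_zero, zero_add]
  apply Finset.sum_congr rfl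
  intro t ht
  obtain ⟨ht1, ht2⟩ := Finset.mem_Icc.1 ht
  have key : (if t ≤ r + 1 then (((m + 1) - t).choose ((r + 1) - t) : ℤ) else 0) =
      (if t ≤ r + 1 then ((m - t).choose ((r + 1) - t) : ℤ) else 0) +
      (if t ≤ r then ((m - t).choose (r - t) : ℤ) else 0) := by
    rcases Nat.lt_or_ge r t with h | h
    · rcases Nat.lt_or_ge (r + 1) t with h' | h'
      · rw [if_neg (by omega), if_neg (by omega), if_neg (by omega)]; ring
      · have het : t = r + 1 := by omega
        rw [if_pos (by omega), if_pos (by omega), if_neg (by omega)]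
        have e1 : (r + 1) - t = 0 := by omega
        rw [e1]
        simp
    · rw [if_pos (by omega), if_pos (by omega), if_pos (by omega)]
      have e1 : (m + 1) - t = (m - t) + 1 := by omega
      have e2 : (r + 1) - t = (r - t) + 1 := by omega
      rw [e1, e2, Nat.choose_succ_succ']
      push_cast
      ring
  rw [key, add_mul, add_mul]

/-- The alternating partial binomial sum. -/
def Esum (r : ℕ) : ℤ := ∑ t ∈ Finset.Icc 1 r, (-2 : ℤ) ^ (t - 1) * (r.choose t : ℤ)

lemma E_key (r : ℕ) : (-2 : ℤ) * Esum r = (-1) ^ r - 1 := by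
  unfold Esum
  rw [Finset.mul_sum]
  have h1 : ∀ t ∈ Finset.Icc 1 r,
      (-2 : ℤ) * ((-2 : ℤ) ^ (t - 1) * (r.choose t : ℤ)) = (-2 : ℤ) ^ t * (r.choose t : ℤ) := by
    intro t ht
    have ht1 := (Finset.mem_Icc.1 ht).1
    have : t = (t - 1) + 1 := by omega
    rw [this]
    simp [pow_succ]
    ring
  rw [Finset.sum_congr rfl h1]
  have h2 : ((-2 : ℤ) + 1) ^ r = ∑ t ∈ Finset.range (r + 1),
      (-2 : ℤ) ^ t * 1 ^ (r - t) * (r.choose t : ℤ) := add_pow (-2 : ℤ) 1 r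
  have h3 : Finset.range (r + 1) = insert 0 (Finset.Icc 1 r) := by
    ext x
    simp only [Finset.mem_range, Finset.mem_insert, Finset.mem_Icc]
    omega
  rw [h3, Finset.sum_insert (by simp)] at h2
  simp only [pow_zero, one_pow, mul_one, one_mul, Nat.choose_zero_right, Nat.cast_one] at h2
  have h4 : ∑ t ∈ Finset.Icc 1 r, (-2 : ℤ) ^ t * (r.choose t : ℤ) =
      ∑ t ∈ Finset.Icc 1 r, (-2 : ℤ) ^ t * 1 ^ (r - t) * (r.choose t : ℤ) := by
    apply Finset.sum_congr rfl
    intro t _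
    rw [one_pow, mul_one]
  rw [h4]
  have : ((-2 : ℤ) + 1) = -1 := by norm_num
  rw [this] at h2
  linarith

lemma E_val (r : ℕ) : Esum r = if Odd r then 1 else 0 := by
  have key := E_key r
  rcases Nat.even_or_odd r with he | ho
  · rw [if_neg (by simp [Nat.not_odd_iff_even, he])]
    rw [he.neg_one_pow] at key
    linarith
  · rw [if_pos ho]
    rw [ho.neg_one_pow] at key
    linarith

lemma S_top (m r : ℕ) : Ssum m r m = if Odd r then (m.choose r : ℤ) else 0 := by
  by_cases hr : r ≤ m
  · have step : Ssum m r m = (m.choose r : ℤ) * Esum r := by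
      unfold Ssum Esum
      rw [Finset.mul_sum]
      rw [← Finset.sum_subset (Finset.Icc_subset_Icc_right hr)]
      · apply Finset.sum_congr rfl
        intro t ht
        obtain ⟨ht1, ht2⟩ := Finset.mem_Icc.1 ht
        rw [if_pos (by omega)]
        have hnat : m.choose r * r.choose t = m.choose t * (m - t).choose (r - t) :=
          Nat.choose_mul ht2
        have hz : (m.choose r : ℤ) * (r.choose t : ℤ) =
            (m.choose t : ℤ) * ((m - t).choose (r - t) : ℤ) := by exact_mod_cast hnat
        linear_combination (-(-2 : ℤ) ^ (t - 1)) * hz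
      · intro t ht hnt
        have h1 := (Finset.mem_Icc.1 ht).1
        have h2 := (Finset.mem_Icc.1 ht).2
        have : ¬ (t ≤ r) := by
          intro h
          exact hnt (Finset.mem_Icc.2 ⟨h1, h⟩)
        rw [if_neg this, zero_mul, zero_mul]
    rw [step, E_val]
    split
    · rw [mul_one]
    · rw [mul_zero]
  · have h0 : m.choose r = 0 := Nat.choose_eq_zero_of_lt (by omega)
    have : Ssum m r m = 0 := by
      unfold Ssum
      apply Finset.sum_eq_zero
      intro t ht
      obtain ⟨ht1, ht2⟩ := Finset.mem_Icc.1 ht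
      rw [if_pos (by omega)]
      have : (m - t).choose (r - t) = 0 := Nat.choose_eq_zero_of_lt (by omega)
      rw [this]
      simp
    rw [this, h0]
    simp

lemma main_eq : ∀ m r s : ℕ, 1 ≤ s → s ≤ m → (T m r s : ℤ) = Ssum m r s := by
  intro m
  induction m with
  | zero => intro r s h1 h2; omega
  | succ m ih =>
    intro r s h1 h2
    rcases Nat.lt_or_ge s (m + 1) with hs | hs
    · have hs' : s ≤ m := by omega
      cases r with
      | zero => rw [T_zero, S_zero]; norm_num
      | succ r =>
        rw [T_rec m r s hs', S_rec m r s hs']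
        push_cast
        rw [ih (r + 1) s h1 hs', ih r s h1 hs']
    · have hsm : s = m + 1 := by omega
      subst hsm
      rw [T_top, S_top]
      split
      · norm_num
      · norm_num

theorem stmt_7 (m : ℕ) (hm : 1 ≤ m) : Tm m = Lm m * Um m := by
  ext r s
  rw [Matrix.mul_apply]
  show (T m (r + 1) (s + 1) : ℤ) = ∑ t : Fin m, Lm m r t * Um m t s
  rw [main_eq m (r + 1) (s + 1) (by omega) (by omega)]
  unfold Ssum
  have key : ∀ t : Fin m, Lm m r t * Um m t s =
      (fun n : ℕ =>
        (if n + 1 ≤ (r : ℕ) + 1 then ((m - (n + 1)).choose (((r : ℕ) + 1) - (n + 1)) : ℤ) else 0) *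
          (-2) ^ ((n + 1) - 1) * ((((s : ℕ) + 1).choose (n + 1) : ℕ) : ℤ)) (t : ℕ) := by
    intro t
    simp only [Lm, Um, Matrix.of_apply]
    have e1 : (t : ℕ) + 1 ≤ (r : ℕ) + 1 ↔ (t : ℕ) ≤ (r : ℕ) := by omega
    have e2 : ((r : ℕ) + 1) - ((t : ℕ) + 1) = (r : ℕ) - (t : ℕ) := by omega
    have e3 : ((t : ℕ) + 1) - 1 = (t : ℕ) := by omega
    rw [e2, e3]
    simp only [e1]
    split <;> ring
  have h1 : ∑ t : Fin m, Lm m r t * Um m t s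
      = ∑ t ∈ Finset.range m,
        (if t + 1 ≤ (r : ℕ) + 1 then ((m - (t + 1)).choose (((r : ℕ) + 1) - (t + 1)) : ℤ) else 0) *
          (-2) ^ ((t + 1) - 1) * ((((s : ℕ) + 1).choose (t + 1) : ℕ) : ℤ) := by
    rw [← Fin.sum_univ_eq_sum_range
      (fun n => (if n + 1 ≤ (r : ℕ) + 1 then ((m - (n + 1)).choose (((r : ℕ) + 1) - (n + 1)) : ℤ) else 0) *
          (-2) ^ ((n + 1) - 1) * ((((s : ℕ) + 1).choose (n + 1) : ℕ) : ℤ)) m]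
    exact Finset.sum_congr rfl (fun t _ => key t)
  have hmap : Finset.Icc 1 m =
      (Finset.range m).map ⟨fun t => t + 1, fun a b h => by simpa using h⟩ := by
    ext x
    simp only [Finset.mem_Icc, Finset.mem_map, Finset.mem_range, Function.Embedding.coeFn_mk]
    constructor
    · rintro ⟨h1, h2⟩
      exact ⟨x - 1, by omega, show x - 1 + 1 = x by omega⟩
    · rintro ⟨a, ha, rfl⟩
      show 1 ≤ a + 1 ∧ a + 1 ≤ m
      omega
  rw [h1, hmap, Finset.sum_map]
  rfl
end

section
/- Let α_1 ≤ ... ≤ α_m and β_1,...,β_n be real numbers with all β_j > α_1 and no α_i equal to any β_j. Let c ∈ ℕ^m with c_t = #{j : α_t < β_j < α_{t+1}} (α_{m+1} = ∞), and let y ∈ ℕ^m with y_r = #{(I,j) : I ⊆ [m], #I = r, j ∈ [n], ∏_{i∈I}(α_i − β_j) < 0}. Then c = T_m^{-1} y, where T_m is the integer matrix (T_m)_{r,s} = #{I ⊆ [m] : #I = r ∧ #{i ∈ I : i ≤ s} is odd}, invertible over ℚ. -/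
open Polynomial Finset

/-- The matrix `T_m` over the rationals, indices `r,s ∈ {1,…,m}` via `Fin m`. -/
def TmQ (m : ℕ) : Matrix (Fin m) (Fin m) ℚ :=
  Matrix.of fun r s => (T m (r + 1) (s + 1) : ℚ)


lemma prod_neg_iff' {ι : Type*} [DecidableEq ι] (f : ι → ℝ) (u : Finset ι)
    (h : ∀ i ∈ u, f i ≠ 0) :
    ((∏ i ∈ u, f i) < 0) ↔ Odd ((u.filter (fun i => f i < 0)).card) := by
  induction u using Finset.induction_on with
  | empty => simp
  | insert a u ha ih =>
    have hne : ∀ i ∈ u, f i ≠ 0 := fun i hi => h i (Finset.mem_insert_of_mem hi)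
    have hprodne : (∏ i ∈ u, f i) ≠ 0 := Finset.prod_ne_zero_iff.2 hne
    rw [Finset.prod_insert ha, Finset.filter_insert]
    rcases lt_or_gt_of_ne (h a (Finset.mem_insert_self a u)) with hfa | hfa
    · rw [if_pos hfa, Finset.card_insert_of_notMem (fun h' => ha (Finset.mem_filter.1 h').1)]
      rw [Nat.odd_add_one, Nat.not_odd_iff_even, ← Nat.not_odd_iff_even, ← ih hne]
      constructor
      · intro hlt hlt2
        nlinarith
      · intro hnot
        rcases hprodne.lt_or_gt with h2 | h2
        · exact absurd h2 hnot
        · nlinarith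
    · rw [if_neg (by linarith), ← ih hne]
      constructor
      · intro hlt
        nlinarith
      · intro hlt
        nlinarith

lemma coeff_prod_one_add {ι : Type*} [DecidableEq ι] (u : Finset ι) (f : ι → ℚ) :
    ∀ k, (∏ i ∈ u, (1 + C (f i) * X)).coeff k
      = ∑ I ∈ u.powersetCard k, ∏ i ∈ I, f i := by
  induction u using Finset.induction_on with
  | empty =>
    intro k
    cases k with
    | zero => simp
    | succ k =>
      rw [Finset.prod_empty, Finset.powersetCard_eq_empty.2 (by simp),
        Polynomial.coeff_one]
      simp
  | insert a u ha ih =>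
    intro k
    rw [Finset.prod_insert ha, add_mul, one_mul, Polynomial.coeff_add]
    cases k with
    | zero =>
      rw [ih 0, mul_assoc, Polynomial.coeff_C_mul, Polynomial.coeff_X_mul_zero]
      simp
    | succ k =>
      rw [mul_assoc, Polynomial.coeff_C_mul, Polynomial.coeff_X_mul, ih, ih,
        Finset.powersetCard_succ_insert ha]
      rw [Finset.sum_union, Finset.sum_image]
      · rw [Finset.mul_sum]
        congr 1
        refine Finset.sum_congr rfl fun I hI => ?_
        have hai : a ∉ I := fun h' => ha ((Finset.mem_powersetCard.1 hI).1 h')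
        rw [Finset.prod_insert hai]
      · intro I hI J hJ h
        have hai : a ∉ I := fun h' => ha ((Finset.mem_powersetCard.1 hI).1 h')
        have haj : a ∉ J := fun h' => ha ((Finset.mem_powersetCard.1 hJ).1 h')
        have := congrArg (Finset.erase · a) h
        simpa [Finset.erase_insert hai, Finset.erase_insert haj] using this
      · rw [Finset.disjoint_left]
        intro I hI hI2
        obtain ⟨J, hJ, rfl⟩ := Finset.mem_image.1 hI2
        exact ha ((Finset.mem_powersetCard.1 hI).1 (Finset.mem_insert_self a J))

lemma sum_Icc_one {M : Type*} [AddCommMonoid M] (m : ℕ) (g : ℕ → M) :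
    ∑ t ∈ Finset.Icc 1 m, g t = ∑ s : Fin m, g ((s:ℕ)+1) := by
  induction m with
  | zero => simp
  | succ m ih =>
    rw [Finset.sum_Icc_succ_top (by omega), ih, Fin.sum_univ_castSucc]
    simp

lemma Tcoeff (m k s : ℕ) (hs : s ≤ m) :
    ((1 - X : ℚ[X])^s * (1+X)^(m-s)).coeff k = (m.choose k : ℚ) - 2 * T m k s := by
  have h1 : (1 - X : ℚ[X])^s * (1+X)^(m-s)
      = ∏ i ∈ Finset.Icc 1 m, (1 + C (if i ≤ s then (-1:ℚ) else 1) * X) := by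
    rw [← Finset.prod_filter_mul_prod_filter_not (Finset.Icc 1 m) (· ≤ s)]
    have e1 : (Finset.Icc 1 m).filter (· ≤ s) = Finset.Icc 1 s := by
      ext i; simp only [Finset.mem_filter, Finset.mem_Icc]; omega
    have e2 : (Finset.Icc 1 m).filter (fun i => ¬ i ≤ s) = Finset.Icc (s+1) m := by
      ext i; simp only [Finset.mem_filter, Finset.mem_Icc]; omega
    rw [e1, e2]
    have p1 : ∏ i ∈ Finset.Icc 1 s, (1 + C (if i ≤ s then (-1:ℚ) else 1) * X)
        = ∏ _i ∈ Finset.Icc 1 s, (1 + C (-1:ℚ) * X) :=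
      Finset.prod_congr rfl fun i hi => by rw [if_pos (Finset.mem_Icc.1 hi).2]
    have p2 : ∏ i ∈ Finset.Icc (s+1) m, (1 + C (if i ≤ s then (-1:ℚ) else 1) * X)
        = ∏ _i ∈ Finset.Icc (s+1) m, (1 + C (1:ℚ) * X) :=
      Finset.prod_congr rfl fun i hi => by
        rw [if_neg (by have := (Finset.mem_Icc.1 hi).1; omega)]
    rw [p1, p2, Finset.prod_const, Finset.prod_const, Nat.card_Icc, Nat.card_Icc]
    have e4 : m + 1 - (s + 1) = m - s := by omega
    norm_num [e4, sub_eq_add_neg]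
  rw [h1, coeff_prod_one_add]
  have h2 : ∀ I ∈ (Finset.Icc 1 m).powersetCard k,
      (∏ i ∈ I, (if i ≤ s then (-1:ℚ) else 1))
        = if Odd ((I.filter (fun i => i ≤ s)).card) then (-1:ℚ) else 1 := by
    intro I _
    rw [← Finset.prod_filter_mul_prod_filter_not I (· ≤ s)]
    rw [Finset.prod_congr rfl (fun i hi => if_pos (Finset.mem_filter.1 hi).2),
      Finset.prod_congr rfl (fun i hi => if_neg (Finset.mem_filter.1 hi).2)]
    rw [Finset.prod_const, Finset.prod_const, one_pow, mul_one]
    rcases Nat.even_or_odd ((I.filter (fun i => i ≤ s)).card) with h | h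
    · rw [h.neg_one_pow, if_neg (Nat.not_odd_iff_even.2 h)]
    · rw [h.neg_one_pow, if_pos h]
  rw [Finset.sum_congr rfl h2]
  rw [Finset.sum_ite, Finset.sum_const, Finset.sum_const]
  have h3 : ((Finset.Icc 1 m).powersetCard k).card = m.choose k := by
    rw [Finset.card_powersetCard, Nat.card_Icc]; simp
  have h4 := Finset.card_filter_add_card_filter_not
    (s := (Finset.Icc 1 m).powersetCard k)
    (p := fun I => Odd ((I.filter (fun i => i ≤ s)).card))
  rw [h3] at h4
  show _ = (m.choose k : ℚ) - 2 * (((Finset.Icc 1 m).powersetCard k).filter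
    (fun I => Odd ((I.filter (fun i => i ≤ s)).card))).card
  set a := (((Finset.Icc 1 m).powersetCard k).filter
    (fun I => Odd ((I.filter (fun i => i ≤ s)).card))).card
  set b := (((Finset.Icc 1 m).powersetCard k).filter
    (fun I => ¬ Odd ((I.filter (fun i => i ≤ s)).card))).card
  have : (a : ℚ) + b = m.choose k := by exact_mod_cast congrArg (Nat.cast : ℕ → ℚ) h4
  push_cast
  rw [nsmul_eq_mul, nsmul_eq_mul]
  push_cast
  linarith [this]

lemma TmQ_det_ne_zero (m : ℕ) : (TmQ m).det ≠ 0 := by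
  intro hdet
  obtain ⟨v, hv0, hv⟩ := Matrix.exists_mulVec_eq_zero_iff.2 hdet
  set p : Fin m → ℚ[X] := fun s => (1 - X)^((s:ℕ)+1) * (1+X)^(m-((s:ℕ)+1)) with hp
  have hdeg : ∀ s : Fin m, (p s).natDegree ≤ m := by
    intro s
    refine le_trans (natDegree_mul_le) ?_
    have h1 : ((1 - X : ℚ[X])^((s:ℕ)+1)).natDegree ≤ (s:ℕ)+1 := by
      refine le_trans (natDegree_pow_le) ?_
      have : (1 - X : ℚ[X]).natDegree ≤ 1 := by
        refine le_trans (natDegree_sub_le _ _) ?_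
        simp
      calc ((s:ℕ)+1) * ((1-X:ℚ[X]).natDegree) ≤ ((s:ℕ)+1) * 1 :=
            Nat.mul_le_mul_left _ this
        _ = (s:ℕ)+1 := Nat.mul_one _
    have h2 : ((1 + X : ℚ[X])^(m-((s:ℕ)+1))).natDegree ≤ m - ((s:ℕ)+1) := by
      refine le_trans (natDegree_pow_le) ?_
      have : (1 + X : ℚ[X]).natDegree ≤ 1 := by
        refine le_trans (natDegree_add_le _ _) ?_
        simp
      calc (m-((s:ℕ)+1)) * ((1+X:ℚ[X]).natDegree) ≤ (m-((s:ℕ)+1)) * 1 :=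
            Nat.mul_le_mul_left _ this
        _ = m-((s:ℕ)+1) := Nat.mul_one _
    have : (s:ℕ)+1 ≤ m := s.2
    omega
  -- Step A : the big polynomial is zero
  set P : ℚ[X] := (∑ s, v s) • ((1+X)^m) - ∑ s : Fin m, v s • p s with hP
  have hPzero : P = 0 := by
    ext k
    rw [coeff_zero, hP, coeff_sub, coeff_smul, finset_sum_coeff]
    rcases Nat.lt_or_ge k (m+1) with hk | hk
    · rcases Nat.eq_zero_or_pos k with rfl | hkpos
      · -- k = 0
        have : ∀ s : Fin m, (v s • p s).coeff 0 = v s := by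
          intro s
          rw [coeff_smul, hp, coeff_zero_eq_eval_zero]
          simp
        rw [Finset.sum_congr rfl (fun s _ => this s)]
        rw [coeff_one_add_X_pow]
        simp
      · -- 1 ≤ k ≤ m
        have hkm : k - 1 < m := by omega
        have h1 : ∀ s : Fin m, (v s • p s).coeff k
            = v s * ((m.choose k : ℚ) - 2 * T m k ((s:ℕ)+1)) := by
          intro s
          rw [coeff_smul, hp]
          rw [Tcoeff m k ((s:ℕ)+1) s.2]
          simp [smul_eq_mul]
        rw [Finset.sum_congr rfl (fun s _ => h1 s), coeff_one_add_X_pow]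
        have hmv := congrFun hv ⟨k-1, hkm⟩
        have : (TmQ m).mulVec v ⟨k-1, hkm⟩
            = ∑ s : Fin m, (T m k ((s:ℕ)+1) : ℚ) * v s := by
          rw [Matrix.mulVec, dotProduct]
          refine Finset.sum_congr rfl fun s _ => ?_
          have : k - 1 + 1 = k := by omega
          simp [TmQ, this]
        rw [this] at hmv
        simp only [Pi.zero_apply] at hmv
        have expand : ∑ s : Fin m, v s * ((m.choose k : ℚ) - 2 * T m k ((s:ℕ)+1))
            = (∑ s : Fin m, v s) * (m.choose k : ℚ)
              - 2 * ∑ s : Fin m, (T m k ((s:ℕ)+1) : ℚ) * v s := by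
          rw [Finset.sum_mul, Finset.mul_sum, ← Finset.sum_sub_distrib]
          refine Finset.sum_congr rfl fun s _ => by ring
        rw [expand, hmv, smul_eq_mul]
        ring
    · -- k > m
      have h0 : ((1+X:ℚ[X])^m).coeff k = 0 := by
        rw [coeff_one_add_X_pow]
        rw [Nat.choose_eq_zero_of_lt (by omega)]
        simp
      have h1 : ∀ s : Fin m, (v s • p s).coeff k = 0 := by
        intro s
        rw [coeff_smul, coeff_eq_zero_of_natDegree_lt (lt_of_le_of_lt (hdeg s) (by omega))]
        simp
      rw [Finset.sum_congr rfl (fun s _ => h1 s), h0]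
      simp
  -- Step B : sum of v is zero
  have hsum : (∑ s, v s) = 0 := by
    have := congrArg (Polynomial.eval 1) hPzero
    rw [hP] at this
    simp only [eval_sub, eval_smul, eval_pow, eval_add, eval_one, eval_X, eval_zero,
      eval_finset_sum] at this
    have h1 : ∀ s : Fin m, v s • Polynomial.eval 1 (p s) = 0 := by
      intro s
      rw [hp]
      simp
    rw [Finset.sum_congr rfl (fun s _ => h1 s)] at this
    simp only [Finset.sum_const, smul_zero, smul_eq_mul, sub_zero, Finset.card_univ,
      nsmul_eq_mul, mul_zero] at this
    have h2 : ((1:ℚ)+1)^m ≠ 0 := by positivity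
    rcases mul_eq_zero.1 this with h | h
    · exact h
    · exact absurd h h2
  -- Step C : Q = 0
  have hQ : (∑ s : Fin m, v s • p s) = 0 := by
    have := hPzero
    rw [hP, hsum, zero_smul, zero_sub, neg_eq_zero] at this
    exact this
  -- Step D : all v s = 0 by strong induction
  have hall : ∀ k : ℕ, ∀ s0 : Fin m, (s0:ℕ) = k → v s0 = 0 := by
    intro k
    induction k using Nat.strong_induction_on with
    | _ k ih =>
      intro s0 hs0
      have hcomp := congrArg (fun q : ℚ[X] => (q.comp (1 - X)).coeff ((s0:ℕ)+1)) hQ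
      simp only [zero_comp, coeff_zero] at hcomp
      rw [Polynomial.sum_comp, finset_sum_coeff] at hcomp
      have hterm : ∀ s : Fin m, ((v s • p s).comp (1-X)).coeff ((s0:ℕ)+1)
          = v s * (if (s:ℕ)+1 ≤ (s0:ℕ)+1
              then ((2 - X:ℚ[X])^(m-((s:ℕ)+1))).coeff ((s0:ℕ)-(s:ℕ)) else 0) := by
        intro s
        rw [smul_comp, coeff_smul, hp, mul_comp, pow_comp, pow_comp, sub_comp, add_comp,
          one_comp, X_comp]
        have e1 : (1:ℚ[X]) - (1 - X) = X := by ring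
        have e2 : (1:ℚ[X]) + (1 - X) = 2 - X := by ring
        rw [e1, e2, mul_comm, coeff_mul_X_pow']
        have e3 : (s0:ℕ)+1-((s:ℕ)+1) = (s0:ℕ)-(s:ℕ) := by omega
        rw [e3, smul_eq_mul]
      rw [Finset.sum_congr rfl (fun s _ => hterm s)] at hcomp
      rw [Finset.sum_eq_single s0] at hcomp
      · rw [if_pos (le_refl _)] at hcomp
        have : (s0:ℕ) - (s0:ℕ) = 0 := by omega
        rw [this, coeff_zero_eq_eval_zero] at hcomp
        simp only [eval_pow, eval_sub, eval_ofNat, eval_X, sub_zero] at hcomp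
        rcases mul_eq_zero.1 hcomp with h | h
        · exact h
        · exact absurd h (by positivity)
      · intro s _ hne
        rcases Nat.lt_or_ge (s:ℕ) (s0:ℕ) with hlt | hge
        · rw [ih (s:ℕ) (by omega) s rfl]
          ring
        · have : ¬ ((s:ℕ)+1 ≤ (s0:ℕ)+1) := by
            intro h
            exact hne (Fin.ext (by omega))
          rw [if_neg this]
          ring
      · intro h
        exact absurd (Finset.mem_univ s0) h
  have : v = 0 := by
    funext s
    exact hall (s:ℕ) s rfl
  exact hv0 this

theorem stmt_18 (m n : ℕ) (hm : 1 ≤ m) (α β : ℕ → ℝ)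
    (hmono : ∀ i, 1 ≤ i → i < m → α i ≤ α (i + 1))
    (hne : ∀ i ∈ Finset.Icc 1 m, ∀ j ∈ Finset.Icc 1 n, α i ≠ β j)
    (hgt : ∀ j ∈ Finset.Icc 1 n, α 1 < β j)
    (c : Fin m → ℕ)
    (hc : ∀ t : Fin m,
      c t = ((Finset.Icc 1 n).filter
        (fun j => α (t + 1) < β j ∧ ((t : ℕ) + 1 < m → β j < α (t + 2)))).card)
    (y : Fin m → ℕ)
    (hy : ∀ r : Fin m,
      y r = (((Finset.powersetCard ((r : ℕ) + 1) (Finset.Icc 1 m)) ×ˢ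
          (Finset.Icc 1 n)).filter
        (fun p => (∏ i ∈ p.1, (α i - β p.2)) < 0)).card) :
    (fun t : Fin m => (c t : ℚ)) = (TmQ m)⁻¹.mulVec (fun r : Fin m => (y r : ℚ)) := by
  classical
  -- monotonicity of α on [1, m]
  have mono : ∀ a b : ℕ, 1 ≤ a → a ≤ b → b ≤ m → α a ≤ α b := by
    intro a b ha hab
    induction b, hab using Nat.le_induction with
    | base => intro _; exact le_rfl
    | succ b hab ih =>
      intro hbm
      exact le_trans (ih (by omega)) (hmono b (by omega) (by omega))
  set sdeg : ℕ → ℕ := fun j => ((Finset.Icc 1 m).filter (fun i => α i < β j)).card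
    with hsdeg
  -- characterization : for i ∈ [1,m], α i < β j ↔ i ≤ sdeg j
  have Hiff : ∀ j ∈ Finset.Icc 1 n, ∀ i ∈ Finset.Icc 1 m, (α i < β j ↔ i ≤ sdeg j) := by
    intro j hj i hi
    obtain ⟨hi1, him⟩ := Finset.mem_Icc.1 hi
    constructor
    · intro h
      have hsub : Finset.Icc 1 i ⊆ (Finset.Icc 1 m).filter (fun i' => α i' < β j) := by
        intro i' hi'
        obtain ⟨h1, h2⟩ := Finset.mem_Icc.1 hi'
        refine Finset.mem_filter.2 ⟨Finset.mem_Icc.2 ⟨h1, by omega⟩, ?_⟩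
        exact lt_of_le_of_lt (mono i' i h1 h2 him) h
      have h2 := Finset.card_le_card hsub
      rw [Nat.card_Icc] at h2
      simp only [hsdeg]
      omega
    · intro hle
      by_contra hnlt
      have hgt' : β j < α i := lt_of_le_of_ne (not_lt.1 hnlt) (hne i hi j hj).symm
      have hsub : (Finset.Icc 1 m).filter (fun i' => α i' < β j) ⊆ Finset.Icc 1 (i-1) := by
        intro i'' hi''
        obtain ⟨hmem, hlt2⟩ := Finset.mem_filter.1 hi''
        obtain ⟨h1, h2⟩ := Finset.mem_Icc.1 hmem
        refine Finset.mem_Icc.2 ⟨h1, ?_⟩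
        by_contra hno
        have : i ≤ i'' := by omega
        have := mono i i'' hi1 this h2
        linarith
      have h2 := Finset.card_le_card hsub
      rw [Nat.card_Icc] at h2
      have h3 : sdeg j ≤ i - 1 := by simp only [hsdeg]; omega
      omega
  have Hrange : ∀ j ∈ Finset.Icc 1 n, 1 ≤ sdeg j ∧ sdeg j ≤ m := by
    intro j hj
    constructor
    · have h1 : (1:ℕ) ∈ (Finset.Icc 1 m).filter (fun i => α i < β j) :=
        Finset.mem_filter.2 ⟨Finset.mem_Icc.2 ⟨le_refl _, hm⟩, hgt j hj⟩
      have h2 := Finset.card_pos.2 ⟨1, h1⟩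
      simp only [hsdeg]
      omega
    · have h2 := Finset.card_filter_le (Finset.Icc 1 m) (fun i => α i < β j)
      rw [Nat.card_Icc] at h2
      simp only [hsdeg]
      omega
  -- c in terms of sdeg fibers
  have Hc : ∀ t : Fin m,
      c t = ((Finset.Icc 1 n).filter (fun j => sdeg j = (t:ℕ)+1)).card := by
    intro t
    rw [hc]
    congr 1
    refine Finset.filter_congr fun j hj => ?_
    have ht1 : ((t:ℕ)+1) ∈ Finset.Icc 1 m := Finset.mem_Icc.2 ⟨by omega, t.2⟩
    constructor
    · rintro ⟨h1, h2⟩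
      have hge : (t:ℕ)+1 ≤ sdeg j := (Hiff j hj _ ht1).1 h1
      rcases Nat.lt_or_ge ((t:ℕ)+1) m with hlt | hgem
      · have ht2 : ((t:ℕ)+2) ∈ Finset.Icc 1 m := Finset.mem_Icc.2 ⟨by omega, by omega⟩
        have := h2 hlt
        have hnot : ¬ α ((t:ℕ)+2) < β j := by linarith
        have := (Hiff j hj _ ht2).not.1 hnot
        simp only [not_le] at this
        omega
      · have := (Hrange j hj).2
        have : sdeg j ≤ (t:ℕ)+1 := by omega
        omega
    · intro heq
      have h1 : α ((t:ℕ)+1) < β j := (Hiff j hj _ ht1).2 (by omega)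
      refine ⟨h1, fun hlt => ?_⟩
      have ht2 : ((t:ℕ)+2) ∈ Finset.Icc 1 m := Finset.mem_Icc.2 ⟨by omega, by omega⟩
      have hnot : ¬ ((t:ℕ)+2 ≤ sdeg j) := by omega
      have := (Hiff j hj _ ht2).not.2 (by omega)
      have hle : β j ≤ α ((t:ℕ)+2) := not_lt.1 this
      exact lt_of_le_of_ne hle (hne _ ht2 j hj).symm
  -- y in terms of T and sdeg
  have Hy : ∀ r : Fin m, y r = ∑ j ∈ Finset.Icc 1 n, T m ((r:ℕ)+1) (sdeg j) := by
    intro r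
    rw [hy, Finset.card_filter, Finset.sum_product, Finset.sum_comm]
    refine Finset.sum_congr rfl fun j hj => ?_
    rw [← Finset.card_filter]
    show _ = T m ((r:ℕ)+1) (sdeg j)
    unfold T
    congr 1
    refine Finset.filter_congr fun I hI => ?_
    have hIsub : I ⊆ Finset.Icc 1 m := (Finset.mem_powersetCard.1 hI).1
    have h0 : ∀ i ∈ I, α i - β j ≠ 0 := fun i hi =>
      sub_ne_zero.2 (hne i (hIsub hi) j hj)
    rw [prod_neg_iff' _ I h0]
    constructor <;> intro h <;> [skip; skip] <;>
    · have : I.filter (fun i => α i - β j < 0) = I.filter (fun i => i ≤ sdeg j) := by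
        refine Finset.filter_congr fun i hi => ?_
        rw [sub_neg]
        exact Hiff j hj i (hIsub hi)
      first
        | (rw [this] at h; exact h)
        | (rw [this]; exact h)
  -- group by value of sdeg
  have Hfib : ∀ r : Fin m, (∑ j ∈ Finset.Icc 1 n, T m ((r:ℕ)+1) (sdeg j))
      = ∑ t ∈ Finset.Icc 1 m,
          ((Finset.Icc 1 n).filter (fun j => sdeg j = t)).card * T m ((r:ℕ)+1) t := by
    intro r
    rw [← Finset.sum_fiberwise_of_maps_to (g := sdeg) (t := Finset.Icc 1 m)
      (fun j hj => Finset.mem_Icc.2 ⟨(Hrange j hj).1, (Hrange j hj).2⟩)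
      (fun j => T m ((r:ℕ)+1) (sdeg j))]
    refine Finset.sum_congr rfl fun t _ => ?_
    have hinner : ∑ j ∈ (Finset.Icc 1 n).filter (fun j => sdeg j = t),
        T m ((r:ℕ)+1) (sdeg j) = ∑ _j ∈ (Finset.Icc 1 n).filter (fun j => sdeg j = t),
        T m ((r:ℕ)+1) t :=
      Finset.sum_congr rfl fun j hj => by rw [(Finset.mem_filter.1 hj).2]
    rw [hinner, Finset.sum_const, smul_eq_mul]
  -- the key identity in ℕ
  have keyN : ∀ r : Fin m,
      y r = ∑ s : Fin m, T m ((r:ℕ)+1) ((s:ℕ)+1) * c s := by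
    intro r
    rw [Hy r, Hfib r, sum_Icc_one m (fun t =>
      ((Finset.Icc 1 n).filter (fun j => sdeg j = t)).card * T m ((r:ℕ)+1) t)]
    refine Finset.sum_congr rfl fun s _ => ?_
    rw [← Hc s, mul_comm]
  -- key identity in ℚ
  have key : (TmQ m).mulVec (fun t => (c t : ℚ)) = (fun r => (y r : ℚ)) := by
    funext r
    rw [Matrix.mulVec, dotProduct]
    have := keyN r
    have : ((y r : ℚ)) = ∑ s : Fin m, (T m ((r:ℕ)+1) ((s:ℕ)+1) : ℚ) * (c s : ℚ) := by
      rw [this]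
      push_cast
      rfl
    rw [this]
    rfl
  have hdet : IsUnit (TmQ m).det := isUnit_iff_ne_zero.2 (TmQ_det_ne_zero m)
  rw [← key, Matrix.mulVec_mulVec, Matrix.nonsing_inv_mul _ hdet, Matrix.one_mulVec]
end
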